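/- For the isotropic (all arguments equal) case, the coefficient R^n(m,m,m) as a polynomial in x,y,z equals (m/(n+m)) S^n(n+m, n+m, n+m) for all n \ge 0 and m \ge 1; that is, 4 S^n(n+m,n+m,n+m) - S^n(n+m+1,n+m,n+m) - S^n(n+m,n+m+1,n+m) - S^n(n+m,n+m,n+m+1) = (m/(n+m)) S^n(n+m,n+m,n+m). -/

import Mathlib

/-- `C(k+N-1, N-1)` with the binomial-series convention for `N = 0`. -/
def Scoef (N k : ℕ) : ℕ := (k + N - 1).choose k

/-- `S^n(N_x,N_y,N_z)` as a polynomial in the indeterminates `x = X 0`, `y = X 1`,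
`z = X 2` over `ℚ`. -/
noncomputable def Spoly (n Nx Ny Nz : ℕ) : MvPolynomial (Fin 3) ℚ :=
  ∑ a ∈ Finset.range (n + 1), ∑ b ∈ Finset.range (n + 1 - a),
    (Scoef Nx a : MvPolynomial (Fin 3) ℚ) * (Scoef Ny b : MvPolynomial (Fin 3) ℚ) *
      (Scoef Nz (n - a - b) : MvPolynomial (Fin 3) ℚ) *
      MvPolynomial.X 0 ^ a * MvPolynomial.X 1 ^ b * MvPolynomial.X 2 ^ (n - a - b)

/-!
Raising one of the parameters from `N` to `N + 1` multiplies the coefficient of a monomial of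
degree `k` in that variable by `(k + N) / N`. Hence, with `N = n + m` and exponents `a + b + c = n`,
the left-hand side multiplies each coefficient of `S^n(N, N, N)` by
`4 - (a + N)/N - (b + N)/N - (c + N)/N = (N - n)/N = m/(n + m)`.
-/

open MvPolynomial

theorem Scoef_succ_mul (N k : ℕ) : Scoef (N + 1) k * N = Scoef N k * (k + N) := by
  rcases N with _ | N
  · rcases k with _ | k
    · rfl
    · simp [Scoef]
  · have h := Nat.choose_mul_succ_eq (k + N) k
    rw [show k + N + 1 - k = N + 1 by omega] at h
    simp only [Scoef, Nat.add_sub_cancel, ← Nat.add_assoc]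
    exact h.symm

theorem Scoef_succ_eq_div_mul {N : ℕ} (hN : N ≠ 0) (k : ℕ) :
    (Scoef (N + 1) k : ℚ) = (k + N) / N * Scoef N k := by
  rw [div_mul_eq_mul_div, eq_div_iff (Nat.cast_ne_zero.mpr hN), mul_comm (k + N : ℚ)]
  exact_mod_cast Scoef_succ_mul N k

theorem four_mul_prod_Scoef_sub_succ {N : ℕ} (hN : N ≠ 0) (a b c : ℕ) :
    4 * (Scoef N a * Scoef N b * Scoef N c : ℚ)
      - Scoef (N + 1) a * Scoef N b * Scoef N c
      - Scoef N a * Scoef (N + 1) b * Scoef N c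
      - Scoef N a * Scoef N b * Scoef (N + 1) c =
    (N - (a + b + c)) / N * (Scoef N a * Scoef N b * Scoef N c) := by
  have hNq : (N : ℚ) ≠ 0 := Nat.cast_ne_zero.mpr hN
  simp only [Scoef_succ_eq_div_mul hN]
  field_simp
  ring

/-- Isotropic case: for `n ≥ 0` and `m ≥ 1`,
`4 S^n(n+m,n+m,n+m) - S^n(n+m+1,n+m,n+m) - S^n(n+m,n+m+1,n+m) - S^n(n+m,n+m,n+m+1)
= (m/(n+m)) S^n(n+m,n+m,n+m)`. -/
theorem stmt13 (n m : ℕ) (hm : 1 ≤ m) :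
    4 * Spoly n (n + m) (n + m) (n + m)
      - Spoly n (n + m + 1) (n + m) (n + m)
      - Spoly n (n + m) (n + m + 1) (n + m)
      - Spoly n (n + m) (n + m) (n + m + 1) =
    MvPolynomial.C ((m : ℚ) / (n + m)) * Spoly n (n + m) (n + m) (n + m) := by
  simp only [Spoly, Finset.mul_sum, ← Finset.sum_sub_distrib]
  refine Finset.sum_congr rfl fun a ha => Finset.sum_congr rfl fun b hb => ?_
  have hab : a + b ≤ n := by
    simp only [Finset.mem_range] at ha hb
    omega
  have hdeg : (a + b + (n - a - b : ℕ) : ℚ) = n := by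
    exact_mod_cast (by omega : a + b + (n - a - b) = n)
  have hcoef := congrArg (C : ℚ → MvPolynomial (Fin 3) ℚ)
    (four_mul_prod_Scoef_sub_succ (N := n + m) (by omega) a b (n - a - b))
  rw [hdeg, Nat.cast_add, add_sub_cancel_left] at hcoef
  simp only [map_sub, map_mul, map_natCast, map_ofNat] at hcoef
  linear_combination hcoef * (X 0 ^ a * X 1 ^ b * X 2 ^ (n - a - b) : MvPolynomial (Fin 3) ℚ)
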